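/- Let F be a field, P a regular n×n upper triangular matrix polynomial over F, and fix i with 1 ≤ i < n. Suppose the adjacent diagonal entries factor as P_{ii} = a_F·a_G and P_{i+1,i+1} = b_F·b_G, where a_F·b_F is coprime to a_G·b_G. Set m = Ω(a_F) and n' = Ω(b_F). Then for all natural numbers α, β with α + β = m + n' and min(m,n') ≤ α, β ≤ max(m,n'), there exists a regular upper triangular n×n matrix polynomial P̃ over F, unimodularly equivalent to P, such that P̃_{kk} = P_{kk} for every k ∉ {i, i+1}, and P̃_{ii} = ã·a_G and P̃_{i+1,i+1} = b̃·b_G for some polynomials ã, b̃ with ã·b̃ a nonzero scalar multiple of a_F·b_F, Ω(ã) = α, and Ω(b̃) = β. -/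

import Mathlib

/-!
A unimodular transformation acting only on the adjacent rows and columns `i, i + 1` keeps `P`
upper triangular and leaves the other diagonal entries alone, so everything happens in the
`2 × 2` block `[[aF aG, x], [0, bF bG]]`. Over `F[X]`, a `2 × 2` matrix with nonzero determinant is
determined up to unimodular equivalence by its determinant and the gcd `d` of its entries (Smith
form). Coprimality splits `d = dF dG` with `dF ∣ aF, bF` and `dG ∣ aG, bG`. Since
`Ω(dF) ≤ min m n'`, the irreducible factors of `aF bF` can be redistributed into `a'` and `b'` with
`Ω(a') = α`, `Ω(b') = β`, both divisible by `dF`; then `[[a' aG, d], [0, b' bG]]` has the same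
determinant and the same gcd of entries as the block, hence is equivalent to it.
-/

open Polynomial

/-- Unimodular equivalence of square matrix polynomials. -/
def UnimodEquiv {F : Type*} [Field F] {n : ℕ}
    (P Q : Matrix (Fin n) (Fin n) F[X]) : Prop :=
  ∃ U V : Matrix (Fin n) (Fin n) F[X], IsUnit U.det ∧ IsUnit V.det ∧ Q = U * P * V

/-- `Ω(p)`: the number of irreducible factors of `p` counted with multiplicity. -/
noncomputable def OmegaCount {F : Type*} [Field F] (p : F[X]) : ℕ :=
  letI := Classical.decEq F
  (UniqueFactorizationMonoid.normalizedFactors p).card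

open Matrix UniqueFactorizationMonoid

namespace UnimodEquiv

variable {F : Type*} [Field F] {n : ℕ} {A B C : Matrix (Fin n) (Fin n) F[X]}

theorem refl (A : Matrix (Fin n) (Fin n) F[X]) : UnimodEquiv A A :=
  ⟨1, 1, by simp, by simp, by simp⟩

theorem symm (h : UnimodEquiv A B) : UnimodEquiv B A := by
  obtain ⟨U, V, hU, hV, rfl⟩ := h
  refine ⟨U⁻¹, V⁻¹, ?_, ?_, ?_⟩
  · rw [Matrix.det_nonsing_inv]; exact hU.ringInverse
  · rw [Matrix.det_nonsing_inv]; exact hV.ringInverse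
  · rw [Matrix.mul_assoc, Matrix.mul_assoc, Matrix.mul_nonsing_inv _ hV, Matrix.mul_one,
      ← Matrix.mul_assoc, Matrix.nonsing_inv_mul _ hU, Matrix.one_mul]

theorem trans (h₁ : UnimodEquiv A B) (h₂ : UnimodEquiv B C) : UnimodEquiv A C := by
  obtain ⟨U₁, V₁, hU₁, hV₁, rfl⟩ := h₁
  obtain ⟨U₂, V₂, hU₂, hV₂, rfl⟩ := h₂
  refine ⟨U₂ * U₁, V₁ * V₂, ?_, ?_, by noncomm_ring⟩
  · rw [Matrix.det_mul]; exact hU₂.mul hU₁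
  · rw [Matrix.det_mul]; exact hV₁.mul hV₂

theorem of_mul_left {U : Matrix (Fin n) (Fin n) F[X]} (hU : IsUnit U.det) (A) :
    UnimodEquiv A (U * A) :=
  ⟨U, 1, hU, by simp, by simp⟩

theorem of_mul_right {V : Matrix (Fin n) (Fin n) F[X]} (hV : IsUnit V.det) (A) :
    UnimodEquiv A (A * V) :=
  ⟨1, V, by simp, hV, by simp⟩

theorem transpose (h : UnimodEquiv A B) : UnimodEquiv Aᵀ Bᵀ := by
  obtain ⟨U, V, hU, hV, rfl⟩ := h
  exact ⟨Vᵀ, Uᵀ, by rwa [Matrix.det_transpose], by rwa [Matrix.det_transpose],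
    by simp [Matrix.transpose_mul, Matrix.mul_assoc]⟩

theorem det_associated (h : UnimodEquiv A B) : Associated A.det B.det := by
  obtain ⟨U, V, ⟨u, hu⟩, ⟨v, hv⟩, rfl⟩ := h
  exact ⟨u * v, by rw [Matrix.det_mul, Matrix.det_mul, Units.val_mul, hu, hv]; ring⟩

theorem dvd_entries {q : F[X]} (h : UnimodEquiv A B) (hq : ∀ i j, q ∣ A i j) (i j : Fin n) :
    q ∣ B i j := by
  obtain ⟨U, V, -, -, rfl⟩ := h
  simp only [Matrix.mul_apply, Finset.sum_mul]
  exact Finset.dvd_sum fun l _ => Finset.dvd_sum fun k _ => ((hq k l).mul_left _).mul_right _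

theorem dvd_entries_iff {q : F[X]} (h : UnimodEquiv A B) :
    (∀ i j, q ∣ A i j) ↔ ∀ i j, q ∣ B i j :=
  ⟨h.dvd_entries, h.symm.dvd_entries⟩

end UnimodEquiv

section TwoByTwo

variable {F : Type*} [Field F]

theorem exists_unimodEquiv_topRight_eq_zero [DecidableEq F] (a x y b : F[X]) :
    ∃ y' b', UnimodEquiv !![a, x; y, b] !![gcd a x, 0; y', b'] := by
  by_cases hg : gcd a x = 0
  · obtain ⟨rfl, rfl⟩ := (gcd_eq_zero_iff _ _).1 hg
    exact ⟨y, b, by simpa [hg] using UnimodEquiv.refl _⟩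
  obtain ⟨a₁, ha₁⟩ := gcd_dvd_left a x
  obtain ⟨x₁, hx₁⟩ := gcd_dvd_right a x
  obtain ⟨u, v, huv⟩ := exists_gcd_eq_mul_add_mul a x
  -- cancelling `gcd a x` from Bézout's identity makes the column operation unimodular
  have hdet : u * a₁ + v * x₁ = 1 :=
    mul_left_cancel₀ hg (by linear_combination (-u) * ha₁ - v * hx₁ - huv)
  have hV : IsUnit (!![u, -x₁; v, a₁] : Matrix (Fin 2) (Fin 2) F[X]).det := by
    rw [Matrix.det_fin_two_of, show u * a₁ - -x₁ * v = 1 by linear_combination hdet]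
    exact isUnit_one
  refine ⟨y * u + b * v, -y * x₁ + b * a₁, ?_⟩
  convert UnimodEquiv.of_mul_right hV !![a, x; y, b] using 1
  rw [Matrix.mul_fin_two, ← huv,
    show a * -x₁ + x * a₁ = 0 by linear_combination (-x₁) * ha₁ + a₁ * hx₁, mul_neg, neg_mul]

theorem exists_unimodEquiv_bottomLeft_eq_zero [DecidableEq F] (a x y b : F[X]) :
    ∃ x' b', UnimodEquiv !![a, x; y, b] !![gcd a y, x'; 0, b'] := by
  obtain ⟨x', b', h⟩ := exists_unimodEquiv_topRight_eq_zero a y x b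
  refine ⟨x', b', ?_⟩
  convert h.transpose using 1 <;> exact Matrix.ext fun i j => by fin_cases i <;> fin_cases j <;> rfl

theorem unimodEquiv_clear_bottomLeft {g y : F[X]} (h : g ∣ y) (b : F[X]) :
    UnimodEquiv !![g, 0; y, b] !![g, 0; 0, b] := by
  obtain ⟨c, rfl⟩ := h
  convert UnimodEquiv.of_mul_left (U := !![1, 0; -c, 1]) (by simp [Matrix.det_fin_two_of])
    !![g, 0; g * c, b] using 1
  simp [mul_comm]

theorem exists_unimodEquiv_diagonal {a : F[X]} (ha : a ≠ 0) (x y b : F[X]) :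
    ∃ d e, UnimodEquiv !![a, x; y, b] !![d, 0; 0, e] := by
  classical
  induction a using (wellFounded_dvdNotUnit (α := F[X])).induction generalizing x y b with
  | _ a ih =>
  obtain ⟨y', b', h₁⟩ := exists_unimodEquiv_topRight_eq_zero a x y b
  by_cases hy' : gcd a x ∣ y'
  · exact ⟨_, _, h₁.trans (unimodEquiv_clear_bottomLeft hy' b')⟩
  obtain ⟨x'', b'', h₂⟩ := exists_unimodEquiv_bottomLeft_eq_zero (gcd a x) 0 y' b'
  have hlt : DvdNotUnit (gcd (gcd a x) y') a :=
    dvdNotUnit_of_dvd_of_not_dvd ((gcd_dvd_left _ _).trans (gcd_dvd_left _ _))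
      fun h => hy' (((gcd_dvd_left a x).trans h).trans (gcd_dvd_right _ _))
  have hne : gcd (gcd a x) y' ≠ 0 := fun h => ha (by simp_all [gcd_eq_zero_iff])
  obtain ⟨d, e, h₃⟩ := ih _ hlt hne x'' 0 b''
  exact ⟨d, e, h₁.trans (h₂.trans h₃)⟩

theorem dvd_diagonal_entries_iff {q D E : F[X]} (hDE : D ∣ E) :
    (∀ i j, q ∣ !![D, 0; 0, E] i j) ↔ q ∣ D := by
  simpa [Fin.forall_fin_two] using fun h => h.trans hDE

theorem exists_unimodEquiv_smith {a : F[X]} (ha : a ≠ 0) (x y b : F[X]) :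
    ∃ D E, D ∣ E ∧ UnimodEquiv !![a, x; y, b] !![D, 0; 0, E] := by
  classical
  obtain ⟨d, e, h₁⟩ := exists_unimodEquiv_diagonal ha x y b
  have h₂ : UnimodEquiv !![d, 0; 0, e] !![d, e; 0, e] := by
    convert UnimodEquiv.of_mul_left (U := !![1, 1; 0, 1]) (by simp [Matrix.det_fin_two_of])
      !![d, 0; 0, e] using 1
    simp
  obtain ⟨y', b', h₃⟩ := exists_unimodEquiv_topRight_eq_zero d e 0 e
  have hg : ∀ i j, gcd d e ∣ !![gcd d e, 0; y', b'] i j :=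
    (h₂.trans h₃).dvd_entries fun i j => by
      fin_cases i <;> fin_cases j <;> simp [gcd_dvd_left, gcd_dvd_right]
  exact ⟨gcd d e, b', by simpa using hg 1 1,
    h₁.trans <| h₂.trans <| h₃.trans <| unimodEquiv_clear_bottomLeft (by simpa using hg 1 0) b'⟩

theorem unimodEquiv_diagonal_of_associated {D D' E E' : F[X]} (hD : Associated D D')
    (hE : Associated E E') : UnimodEquiv !![D, 0; 0, E] !![D', 0; 0, E'] := by
  obtain ⟨u, rfl⟩ := hD
  obtain ⟨v, rfl⟩ := hE
  convert UnimodEquiv.of_mul_right (V := !![(u : F[X]), 0; 0, (v : F[X])])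
    (by simp [Matrix.det_fin_two_of]) !![D, 0; 0, E] using 1
  simp

theorem unimodEquiv_of_dvd_entries_iff {M M' : Matrix (Fin 2) (Fin 2) F[X]} (hM : M 0 0 ≠ 0)
    (hM' : M' 0 0 ≠ 0) (hdet : M.det ≠ 0) (hassoc : Associated M.det M'.det)
    (hdvd : ∀ q, (∀ i j, q ∣ M i j) ↔ ∀ i j, q ∣ M' i j) : UnimodEquiv M M' := by
  obtain ⟨D, E, hDE, hME⟩ := exists_unimodEquiv_smith hM (M 0 1) (M 1 0) (M 1 1)
  obtain ⟨D', E', hDE', hME'⟩ := exists_unimodEquiv_smith hM' (M' 0 1) (M' 1 0) (M' 1 1)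
  rw [← M.eta_fin_two] at hME
  rw [← M'.eta_fin_two] at hME'
  have hdvdD : ∀ q, q ∣ D ↔ q ∣ D' := fun q => by
    rw [← dvd_diagonal_entries_iff hDE, ← dvd_diagonal_entries_iff hDE', ← hME.dvd_entries_iff,
      ← hME'.dvd_entries_iff, hdvd]
  have hD : Associated D D' := associated_of_dvd_dvd ((hdvdD D).1 dvd_rfl) ((hdvdD D').2 dvd_rfl)
  have hprod : Associated (D * E) (D' * E') := by
    simpa [Matrix.det_fin_two_of] using
      (hME.det_associated.symm.trans hassoc).trans hME'.det_associated
  have hD0 : D ≠ 0 := by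
    rintro rfl
    exact hdet (by simpa [Matrix.det_fin_two_of] using hME.det_associated)
  exact hME.trans <|
    (unimodEquiv_diagonal_of_associated hD (hprod.of_mul_left hD hD0)).trans hME'.symm

end TwoByTwo

theorem Multiset.exists_add_eq_card_eq_of_add_le {α : Type*} [DecidableEq α]
    {S T : Multiset α} (hT : T + T ≤ S) {k l : ℕ} (hS : card S = k + l) (hk : card T ≤ k)
    (hl : card T ≤ l) :
    ∃ A B, A + B = S ∧ T ≤ A ∧ T ≤ B ∧ card A = k ∧ card B = l := by
  set L := S - (T + T)
  have hL : card L = k + l - 2 * card T := by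
    rw [card_sub hT, hS, card_add]; ring_nf
  obtain ⟨R, hR⟩ : ∃ R, R ∈ powersetCard (k - card T) L := by
    rw [← card_pos_iff_exists_mem, card_powersetCard]; exact Nat.choose_pos (by omega)
  obtain ⟨hRL, hRcard⟩ := mem_powersetCard.1 hR
  have hsum : T + R + (T + (L - R)) = S := by
    rw [add_add_add_comm, add_tsub_cancel_of_le hRL, add_tsub_cancel_of_le hT]
  refine ⟨T + R, T + (L - R), hsum, le_add_right _ _, le_add_right _ _, ?_, ?_⟩
  · rw [card_add, hRcard]; omega
  · have := congrArg card hsum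
    rw [card_add, card_add, hRcard, hS] at this
    omega

section Omega

variable {F : Type*} [Field F]

theorem omegaCount_eq_card [DecidableEq F] (p : F[X]) :
    OmegaCount p = Multiset.card (normalizedFactors p) := by
  unfold OmegaCount; congr!

theorem Associated.omegaCount_eq {p q : F[X]} (h : Associated p q) :
    OmegaCount p = OmegaCount q := by
  classical
  rw [omegaCount_eq_card, omegaCount_eq_card, h.normalizedFactors_eq]

theorem omegaCount_le_of_dvd {p q : F[X]} (hq : q ≠ 0) (h : p ∣ q) :
    OmegaCount p ≤ OmegaCount q := by
  classical
  rw [omegaCount_eq_card, omegaCount_eq_card]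
  exact Multiset.card_le_card
    ((dvd_iff_normalizedFactors_le_normalizedFactors (ne_zero_of_dvd_ne_zero hq h) hq).1 h)

theorem omegaCount_prod_of_le [DecidableEq F] {p : F[X]} {M : Multiset F[X]}
    (hM : M ≤ normalizedFactors p) : OmegaCount M.prod = Multiset.card M := by
  rw [omegaCount_eq_card, normalizedFactors_prod_eq M
    fun q hq => irreducible_of_normalized_factor q (Multiset.mem_of_le hM hq), Multiset.card_map]

theorem exists_mul_eq_omegaCount_eq {aF bF dF : F[X]} (haF : aF ≠ 0) (hbF : bF ≠ 0)
    (hdFa : dF ∣ aF) (hdFb : dF ∣ bF) {k l : ℕ} (hsum : k + l = OmegaCount aF + OmegaCount bF)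
    (hk : OmegaCount dF ≤ k) (hl : OmegaCount dF ≤ l) :
    ∃ a' b', a' * b' = aF * bF ∧ dF ∣ a' ∧ dF ∣ b' ∧ OmegaCount a' = k ∧ OmegaCount b' = l := by
  classical
  have hab : aF * bF ≠ 0 := mul_ne_zero haF hbF
  have hdF : dF ≠ 0 := ne_zero_of_dvd_ne_zero haF hdFa
  have hTT : normalizedFactors dF + normalizedFactors dF ≤ normalizedFactors (aF * bF) := by
    rw [← normalizedFactors_mul hdF hdF]
    exact (dvd_iff_normalizedFactors_le_normalizedFactors (mul_ne_zero hdF hdF) hab).1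
      (mul_dvd_mul hdFa hdFb)
  rw [omegaCount_eq_card, omegaCount_eq_card] at hsum
  rw [omegaCount_eq_card] at hk hl
  obtain ⟨A, B, hAB, hTA, hTB, hA, hB⟩ := Multiset.exists_add_eq_card_eq_of_add_le hTT
    (by rw [normalizedFactors_mul haF hbF, Multiset.card_add, hsum]) hk hl
  obtain ⟨w, hw⟩ := prod_normalizedFactors hab
  have hdFT : dF ∣ (normalizedFactors dF).prod := (prod_normalizedFactors hdF).symm.dvd
  refine ⟨A.prod, B.prod * w, ?_, hdFT.trans (Multiset.prod_dvd_prod_of_le hTA),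
    (hdFT.trans (Multiset.prod_dvd_prod_of_le hTB)).mul_right _,
    (omegaCount_prod_of_le (hAB ▸ Multiset.le_add_right A B)).trans hA, ?_⟩
  · rw [← mul_assoc, ← Multiset.prod_add, hAB, hw]
  · rw [← (associated_mul_unit_right _ _ w.isUnit).omegaCount_eq,
      omegaCount_prod_of_le (hAB ▸ Multiset.le_add_left B A), hB]

end Omega

theorem exists_eq_mul_dvd_dvd_of_isCoprime {R : Type*} [CommRing R] [DecompositionMonoid R]
    {aF aG bF bG d : R} (hcop : IsCoprime (aF * bF) (aG * bG)) (ha : d ∣ aF * aG)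
    (hb : d ∣ bF * bG) : ∃ dF dG, d = dF * dG ∧ dF ∣ aF ∧ dF ∣ bF ∧ dG ∣ aG ∧ dG ∣ bG := by
  obtain ⟨dF, dG, hdFa, hdGa, rfl⟩ := exists_dvd_and_dvd_of_dvd_mul ha
  have hdF : IsCoprime dF bG := (hcop.of_isCoprime_of_dvd_left
    (hdFa.trans (dvd_mul_right _ _))).of_isCoprime_of_dvd_right (dvd_mul_left _ _)
  have hdG : IsCoprime dG bF := (hcop.symm.of_isCoprime_of_dvd_left
    (hdGa.trans (dvd_mul_right _ _))).of_isCoprime_of_dvd_right (dvd_mul_left _ _)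
  exact ⟨dF, dG, rfl, hdFa, hdF.dvd_of_dvd_mul_right ((dvd_mul_right _ _).trans hb), hdGa,
    hdG.dvd_of_dvd_mul_left ((dvd_mul_left _ _).trans hb)⟩

theorem exists_unimodEquiv_redistribute {F : Type*} [Field F] {aF aG bF bG : F[X]} (x : F[X])
    (haF : aF ≠ 0) (haG : aG ≠ 0) (hbF : bF ≠ 0) (hbG : bG ≠ 0)
    (hcop : IsCoprime (aF * bF) (aG * bG)) {k l : ℕ}
    (hsum : k + l = OmegaCount aF + OmegaCount bF)
    (hk : min (OmegaCount aF) (OmegaCount bF) ≤ k) (hl : min (OmegaCount aF) (OmegaCount bF) ≤ l) :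
    ∃ a' b' y, a' * b' = aF * bF ∧ OmegaCount a' = k ∧ OmegaCount b' = l ∧
      UnimodEquiv !![aF * aG, x; 0, bF * bG] !![a' * aG, y; 0, b' * bG] := by
  classical
  set d := gcd (aF * aG) (gcd x (bF * bG))
  have hdA : d ∣ aF * aG := gcd_dvd_left _ _
  have hdx : d ∣ x := (gcd_dvd_right _ _).trans (gcd_dvd_left _ _)
  have hdB : d ∣ bF * bG := (gcd_dvd_right _ _).trans (gcd_dvd_right _ _)
  obtain ⟨dF, dG, hd, hdFa, hdFb, hdGa, hdGb⟩ := exists_eq_mul_dvd_dvd_of_isCoprime hcop hdA hdB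
  have hdF : OmegaCount dF ≤ min (OmegaCount aF) (OmegaCount bF) :=
    le_min (omegaCount_le_of_dvd haF hdFa) (omegaCount_le_of_dvd hbF hdFb)
  obtain ⟨a', b', hab, hdFa', hdFb', hk', hl'⟩ :=
    exists_mul_eq_omegaCount_eq haF hbF hdFa hdFb hsum (hdF.trans hk) (hdF.trans hl)
  have ha' : a' ≠ 0 := left_ne_zero_of_mul (hab ▸ mul_ne_zero haF hbF)
  -- the new block keeps the determinant and the gcd `d` of the entries
  have hda' : d ∣ a' * aG := hd ▸ mul_dvd_mul hdFa' hdGa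
  have hdb' : d ∣ b' * bG := hd ▸ mul_dvd_mul hdFb' hdGb
  refine ⟨a', b', d, hab, hk', hl', unimodEquiv_of_dvd_entries_iff ?_ ?_ ?_ ?_ fun q => ?_⟩
  · simpa using mul_ne_zero haF haG
  · simpa using mul_ne_zero ha' haG
  · simpa [Matrix.det_fin_two_of] using ⟨⟨haF, haG⟩, hbF, hbG⟩
  · exact .of_eq (by simp only [Matrix.det_fin_two_of]; linear_combination (-(aG * bG)) * hab)
  · simp only [Fin.forall_fin_two, Matrix.of_apply, Matrix.cons_val', Matrix.cons_val_zero,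
      Matrix.cons_val_one, Matrix.empty_val', Matrix.cons_val_fin_one, dvd_zero]
    constructor
    · rintro ⟨⟨ha, hx⟩, -, hb⟩
      have hq : q ∣ d := dvd_gcd ha (dvd_gcd hx hb)
      exact ⟨⟨hq.trans hda', hq⟩, trivial, hq.trans hdb'⟩
    · rintro ⟨⟨-, hq⟩, -, -⟩
      exact ⟨⟨hq.trans hdA, hq.trans hdx⟩, trivial, hq.trans hdB⟩

section BlockEmbedding

variable {R ι β : Type*} [CommRing R] [Fintype ι] [Fintype β] [DecidableEq β]

noncomputable def blockEmbed (e : Fin 2 ⊕ β ≃ ι) (A : Matrix (Fin 2) (Fin 2) R) : Matrix ι ι R :=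
  reindex e e (fromBlocks A 0 0 1)

theorem det_blockEmbed [DecidableEq ι] (e : Fin 2 ⊕ β ≃ ι) (A : Matrix (Fin 2) (Fin 2) R) :
    (blockEmbed e A).det = A.det := by
  simp [blockEmbed]

theorem blockEmbed_mul_mul_blockEmbed_apply (e : Fin 2 ⊕ β ≃ ι)
    (U V : Matrix (Fin 2) (Fin 2) R) (P : Matrix ι ι R) (s t : Fin 2 ⊕ β) :
    (blockEmbed e U * P * blockEmbed e V) (e s) (e t) =
      fromBlocks (U * P.submatrix (e ∘ .inl) (e ∘ .inl) * V)
        (U * P.submatrix (e ∘ .inl) (e ∘ .inr)) (P.submatrix (e ∘ .inr) (e ∘ .inl) * V)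
        (P.submatrix (e ∘ .inr) (e ∘ .inr)) s t := by
  have hP : P = reindex e e (fromBlocks (P.submatrix (e ∘ .inl) (e ∘ .inl))
      (P.submatrix (e ∘ .inl) (e ∘ .inr)) (P.submatrix (e ∘ .inr) (e ∘ .inl))
      (P.submatrix (e ∘ .inr) (e ∘ .inr))) := by
    ext r c
    obtain ⟨s, rfl⟩ := e.surjective r
    obtain ⟨t, rfl⟩ := e.surjective c
    cases s <;> cases t <;> simp
  conv_lhs => rw [hP]
  simp [blockEmbed, submatrix_mul_equiv, fromBlocks_multiply]

theorem Matrix.IsUpperTriangular.blockEmbed_mul_mul {N : ℕ} {P : Matrix (Fin N) (Fin N) R}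
    (hP : P.IsUpperTriangular) (e : Fin 2 ⊕ β ≃ Fin N) (he : (e (.inl 1) : ℕ) = e (.inl 0) + 1)
    {U V : Matrix (Fin 2) (Fin 2) R} (hUV : (U * P.submatrix (e ∘ .inl) (e ∘ .inl) * V) 1 0 = 0) :
    (blockEmbed e U * P * blockEmbed e V).IsUpperTriangular := by
  have hout : ∀ k, (e (.inr k) : ℕ) < e (.inl 0) ∨ (e (.inl 1) : ℕ) < e (.inr k) := by
    intro k
    have h₀ : (e (.inr k) : ℕ) ≠ e (.inl 0) := fun h => Sum.inr_ne_inl (e.injective (Fin.ext h))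
    have h₁ : (e (.inr k) : ℕ) ≠ e (.inl 1) := fun h => Sum.inr_ne_inl (e.injective (Fin.ext h))
    omega
  have hblk : ∀ p, (e (.inl 0) : ℕ) ≤ e (.inl p) ∧ (e (.inl p) : ℕ) ≤ e (.inl 1) :=
    Fin.forall_fin_two.2 ⟨by omega, by omega⟩
  intro r c (hrc : c < r)
  obtain ⟨s, rfl⟩ := e.surjective r
  obtain ⟨t, rfl⟩ := e.surjective c
  rw [Fin.lt_def] at hrc
  rw [blockEmbed_mul_mul_blockEmbed_apply]
  rcases s with p | k <;> rcases t with q | l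
  · revert p q
    simp only [Fin.forall_fin_two]
    refine ⟨⟨?_, ?_⟩, ?_, ?_⟩ <;> intro hrc <;> first | exact hUV | omega
  · have hcol (q : Fin 2) : P (e (.inl q)) (e (.inr l)) = 0 :=
      hP (by have := hout l; have := hblk p; have := hblk q; omega :
        (e (.inr l) : ℕ) < e (.inl q))
    simp [mul_apply, hcol]
  · have hrow (p : Fin 2) : P (e (.inr k)) (e (.inl p)) = 0 :=
      hP (by have := hout k; have := hblk p; have := hblk q; omega :
        (e (.inl p) : ℕ) < e (.inr k))
    simp [mul_apply, hrow]
  · exact hP hrc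

def sumPairEquiv [DecidableEq ι] {i j : ι} (hij : i ≠ j) :
    Fin 2 ⊕ {k : ι // k ≠ i ∧ k ≠ j} ≃ ι where
  toFun := Sum.elim ![i, j] Subtype.val
  invFun k := if hi : k = i then .inl 0 else if hj : k = j then .inl 1 else .inr ⟨k, hi, hj⟩
  left_inv := by
    rintro (p | ⟨k, hki, hkj⟩)
    · fin_cases p <;> simp [hij.symm]
    · simp [hki, hkj]
  right_inv k := by
    by_cases hi : k = i
    · simp [hi]
    · by_cases hj : k = j <;> simp [hi, hj, hij.symm]

end BlockEmbedding

theorem exists_unimodEquiv_update_adjacent_block {F : Type*} [Field F] {N : ℕ}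
    {P : Matrix (Fin N) (Fin N) F[X]} (hP : P.IsUpperTriangular)
    {i j : Fin N} (hij : (j : ℕ) = i + 1) {a y b : F[X]}
    (h : UnimodEquiv !![P i i, P i j; 0, P j j] !![a, y; 0, b]) :
    ∃ P', UnimodEquiv P P' ∧ P'.IsUpperTriangular ∧
      (∀ k, k ≠ i → k ≠ j → P' k k = P k k) ∧ P' i i = a ∧ P' j j = b := by
  obtain ⟨U, V, hU, hV, hUV⟩ := h
  have hlt : i < j := by rw [Fin.lt_def]; omega
  set e := sumPairEquiv hlt.ne
  have hblock : U * P.submatrix (e ∘ .inl) (e ∘ .inl) * V = !![a, y; 0, b] := by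
    rw [hUV]
    congr 2
    ext p q
    fin_cases p <;> fin_cases q <;> simp [e, sumPairEquiv, hP hlt]
  have hdiag : ∀ s, (blockEmbed e U * P * blockEmbed e V) (e s) (e s) =
      fromBlocks !![a, y; 0, b] (U * P.submatrix (e ∘ .inl) (e ∘ .inr))
        (P.submatrix (e ∘ .inr) (e ∘ .inl) * V) (P.submatrix (e ∘ .inr) (e ∘ .inr)) s s := by
    intro s
    rw [blockEmbed_mul_mul_blockEmbed_apply, hblock]
  exact ⟨_, ⟨_, _, by rwa [det_blockEmbed], by rwa [det_blockEmbed], rfl⟩,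
    hP.blockEmbed_mul_mul e hij (by rw [hblock]; rfl),
    fun k hki hkj => hdiag (.inr ⟨k, hki, hkj⟩), hdiag (.inl 0), hdiag (.inl 1)⟩

theorem statement_7 {F : Type*} [Field F] {N : ℕ}
    (P : Matrix (Fin N) (Fin N) F[X])
    (hreg : P.det ≠ 0)
    (hupper : ∀ i j : Fin N, j < i → P i j = 0)
    (i : Fin N) (hi : (i : ℕ) + 1 < N)
    (aF aG bF bG : F[X])
    (ha : P i i = aF * aG)
    (hb : P ⟨(i : ℕ) + 1, hi⟩ ⟨(i : ℕ) + 1, hi⟩ = bF * bG)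
    (hcop : IsCoprime (aF * bF) (aG * bG))
    (m n' : ℕ) (hm : m = OmegaCount aF) (hn' : n' = OmegaCount bF) :
    ∀ α β : ℕ, α + β = m + n' →
      min m n' ≤ α → α ≤ max m n' → min m n' ≤ β → β ≤ max m n' →
      ∃ (P' : Matrix (Fin N) (Fin N) F[X]) (a' b' : F[X]),
        P'.det ≠ 0 ∧
        (∀ i' j' : Fin N, j' < i' → P' i' j' = 0) ∧
        UnimodEquiv P P' ∧
        (∀ k : Fin N, k ≠ i → k ≠ ⟨(i : ℕ) + 1, hi⟩ → P' k k = P k k) ∧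
        P' i i = a' * aG ∧
        P' ⟨(i : ℕ) + 1, hi⟩ ⟨(i : ℕ) + 1, hi⟩ = b' * bG ∧
        (∃ c : F, c ≠ 0 ∧ a' * b' = C c * (aF * bF)) ∧
        OmegaCount a' = α ∧ OmegaCount b' = β := by
  rintro α β hsum hα - hβ -
  subst hm hn'
  set j : Fin N := ⟨(i : ℕ) + 1, hi⟩
  have hP : P.IsUpperTriangular := fun r c h => hupper r c h
  have hdiag : ∀ k, P k k ≠ 0 := fun k =>
    Finset.prod_ne_zero_iff.1 (det_of_isUpperTriangular hP ▸ hreg : ∏ k, P k k ≠ 0) k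
      (Finset.mem_univ k)
  obtain ⟨haF, haG⟩ := mul_ne_zero_iff.1 (ha ▸ hdiag i)
  obtain ⟨hbF, hbG⟩ := mul_ne_zero_iff.1 (hb ▸ hdiag j)
  obtain ⟨a', b', y, hab, hα', hβ', hblock⟩ :=
    exists_unimodEquiv_redistribute (P i j) haF haG hbF hbG hcop hsum hα hβ
  rw [← ha, ← hb] at hblock
  obtain ⟨P', hPP', hupper', hdiag', hii, hjj⟩ :=
    exists_unimodEquiv_update_adjacent_block hP rfl hblock
  exact ⟨P', a', b', hPP'.det_associated.ne_zero_iff.1 hreg, fun r c h => hupper' h, hPP',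
    hdiag', hii, hjj, ⟨1, one_ne_zero, by rw [map_one, one_mul, hab]⟩, hα', hβ'⟩
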